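/- Let n ≥ 3 and let w be a fully commutative element of the Coxeter group W of type H_{n-1}. Then in any reduced expression for w, every bilateral occurrence of a letter is an occurrence of the generator s_1. -/

import Mathlib

open CoxeterSystem List LaurentPolynomial

noncomputable section

/-! ### Coxeter systems of types `H` and `B` -/

/-- Symmetric bond function: index `i` corresponds to the generator `s_{i+1}`; the bond
between indices `0`,`1` (i.e. `s₁`,`s₂`) equals `c`, consecutive indices otherwise have
bond `3`, and all other pairs commute. -/
def genM (c i j : ℕ) : ℕ :=
  if i = j then 1
  else if i + 1 = j ∨ j + 1 = i then (if i = 0 ∨ j = 0 then c else 3)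
  else 2

lemma genM_symm (c i j : ℕ) : genM c i j = genM c j i := by
  unfold genM; split_ifs <;> omega

lemma genM_diag (c i : ℕ) : genM c i i = 1 := by unfold genM; simp

lemma genM_ne_one (c i j : ℕ) (hc : 3 ≤ c) (h : i ≠ j) : genM c i j ≠ 1 := by
  unfold genM; split_ifs <;> omega

/-- The Coxeter matrix on `k` generators, with first bond `c` (type `H` for `c = 5`,
type `B` for `c = 4`). -/
def Cmat (c k : ℕ) (hc : 3 ≤ c) : CoxeterMatrix (Fin k) where
  M := Matrix.of fun i j => genM c i j
  isSymm := by ext i j; exact genM_symm c j i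
  diagonal := fun i => genM_diag c i
  off_diagonal := fun i j h => genM_ne_one c i j hc (fun hh => h (Fin.ext hh))

/-- The Coxeter matrix of type `H_k`. -/
abbrev Hmat (k : ℕ) : CoxeterMatrix (Fin k) := Cmat 5 k (by norm_num)

/-- The Coxeter matrix of type `B_k`. -/
abbrev Bmat (k : ℕ) : CoxeterMatrix (Fin k) := Cmat 4 k (by norm_num)

/-- `w` is fully commutative: it has no reduced factorization `w = x₁ ⬝ w_{st} ⬝ x₂`,
where `w_{st}` is the longest element of a rank-2 parabolic subgroup `⟨s,t⟩` with
`m(s,t) ≥ 3`. -/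
def FC {B : Type*} {W : Type*} [Group W] {M : CoxeterMatrix B} (cs : CoxeterSystem M W)
    (w : W) : Prop :=
  ¬ ∃ (x₁ x₂ : W) (i j : B), 3 ≤ M i j ∧
      w = x₁ * cs.wordProd (alternatingWord i j (M i j)) * x₂ ∧
      cs.length w = cs.length x₁ + cs.length (cs.wordProd (alternatingWord i j (M i j)))
        + cs.length x₂

/-- Bruhat–Chevalley order: some reduced expression for `w` contains a subword which is a
reduced expression for `x`. -/
def BruhatLE {B : Type*} {W : Type*} [Group W] {M : CoxeterMatrix B}
    (cs : CoxeterSystem M W) (x w : W) : Prop :=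
  ∃ ω ω' : List B, cs.IsReduced ω ∧ cs.wordProd ω = w ∧
    ω'.Sublist ω ∧ cs.IsReduced ω' ∧ cs.wordProd ω' = x

/-! ### Commutations acting on occurrences of letters -/

variable {B : Type*}

/-- One commutation move: swap the letters in positions `k` and `k+1`, which must commute. -/
def SwapStep (M : CoxeterMatrix B) (ω ω' : List B) (k : ℕ) : Prop :=
  ∃ a b : B, ω[k]? = some a ∧ ω[k+1]? = some b ∧ M a b = 2 ∧
    ω' = (ω.set k b).set (k+1) a

/-- Effect of the swap at position `k` on a tracked position. -/
def swapAt (k p : ℕ) : ℕ := if p = k then k + 1 else if p = k + 1 then k else p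

/-- A sequence of commutation moves, together with the induced map on positions
(tracking occurrences of letters). -/
inductive CommPath (M : CoxeterMatrix B) : List B → List B → (ℕ → ℕ) → Prop
  | refl (ω : List B) : CommPath M ω ω id
  | step {ω ω' ω'' : List B} {f : ℕ → ℕ} {k : ℕ} :
      CommPath M ω ω' f → SwapStep M ω' ω'' k → CommPath M ω ω'' (swapAt k ∘ f)

/-- The occurrence at position `p` of `ω` is internal: after commutations it is the middle
term of a consecutive subsequence `s_q s_p s_q` with `m(s_p, s_q) ≥ 3`. -/
def Internal (M : CoxeterMatrix B) (ω : List B) (p : ℕ) : Prop :=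
  ∃ (ω' : List B) (f : ℕ → ℕ) (a q : B), CommPath M ω ω' f ∧ 1 ≤ f p ∧
    ω'[f p]? = some a ∧ ω'[f p - 1]? = some q ∧ ω'[f p + 1]? = some q ∧ 3 ≤ M a q

/-- The occurrence at position `p` of `ω` is lateral with respect to the internal
occurrence at position `r`. -/
def LateralWrt (M : CoxeterMatrix B) (ω : List B) (p r : ℕ) : Prop :=
  ¬ Internal M ω p ∧ Internal M ω r ∧
    ∃ (ω' : List B) (f : ℕ → ℕ) (a q : B), CommPath M ω ω' f ∧
      (f p + 1 = f r ∨ f p = f r + 1) ∧ 1 ≤ f r ∧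
      ω'[f r]? = some q ∧ ω'[f r - 1]? = some a ∧ ω'[f r + 1]? = some a ∧
      ω'[f p]? = some a ∧ 3 ≤ M a q

/-- Lateral occurrence. -/
def Lateral (M : CoxeterMatrix B) (ω : List B) (p : ℕ) : Prop := ∃ r, LateralWrt M ω p r

/-- Bilateral occurrence: lateral with respect to two different internal occurrences. -/
def Bilateral (M : CoxeterMatrix B) (ω : List B) (p : ℕ) : Prop :=
  ∃ r₁ r₂, r₁ ≠ r₂ ∧ LateralWrt M ω p r₁ ∧ LateralWrt M ω p r₂

/-- The occurrence at position `p` is internal and lies in the set `R`: after commutations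
it occurs in a subsequence `t s t` whose rightmost occurrence of `t` is bilateral. -/
def InRSet (M : CoxeterMatrix B) (ω : List B) (p : ℕ) : Prop :=
  Internal M ω p ∧
    ∃ (ω' : List B) (f : ℕ → ℕ) (r : ℕ) (a q : B), CommPath M ω ω' f ∧
      f r = f p + 1 ∧ 1 ≤ f p ∧
      ω'[f p]? = some q ∧ ω'[f p - 1]? = some a ∧ ω'[f p + 1]? = some a ∧ 3 ≤ M q a ∧
      Bilateral M ω r

/-- A word is right justified if every occurrence in `R` has the letter immediately to its
left lateral or internal, and every internal occurrence not in `R` has the letters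
immediately to its left and right lateral or internal. -/
def RightJustified (M : CoxeterMatrix B) (ω : List B) : Prop :=
  ∀ p : ℕ,
    (InRSet M ω p → 1 ≤ p ∧ (Lateral M ω (p-1) ∨ Internal M ω (p-1))) ∧
    (Internal M ω p → ¬ InRSet M ω p →
      1 ≤ p ∧ p + 1 < ω.length ∧ (Lateral M ω (p-1) ∨ Internal M ω (p-1)) ∧
      (Lateral M ω (p+1) ∨ Internal M ω (p+1)))

/-- A bad occurrence of `s₂` (Remark 3.1.11): a lateral occurrence which after commutations
appears as the overscored letter in `s₃ s₁ s₂ s₁ s̄₂ s₃` or `s₃ s̄₂ s₁ s₂ s₁ s₃`. -/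
def BadOcc (M : CoxeterMatrix B) (s1 s2 : B) (ω : List B) (p : ℕ) : Prop :=
  Lateral M ω p ∧
    ∃ (ω' : List B) (f : ℕ → ℕ) (s3 : B) (u v : List B), CommPath M ω ω' f ∧ M s2 s3 = 3 ∧
      ((ω' = u ++ [s3, s1, s2, s1, s2, s3] ++ v ∧ f p = u.length + 4) ∨
       (ω' = u ++ [s3, s2, s1, s2, s1, s3] ++ v ∧ f p = u.length + 1))

/-! ### Blocks for the canonical decomposition of Lemma 3.2.5 -/

/-- Blocks: a plain generator, or one of the six forms of maximal contiguous subsequences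
of internal and lateral letters. -/
inductive Blk (B : Type*) where
  | gen (i : B)
  | f1 | f2 | f3 | f4 | f5 | f6

namespace Blk

/-- The underlying word of a block (`s1`, `s2` are the first two Coxeter generators). -/
def word (s1 s2 : B) : Blk B → List B
  | .gen i => [i]
  | .f1 => [s1, s2]
  | .f2 => [s1, s2, s1]
  | .f3 => [s2, s1, s2]
  | .f4 => [s1, s2, s1, s2]
  | .f5 => [s2, s1, s2]
  | .f6 => [s2, s1, s2, s1]

/-- The positions within each block that are internal. -/
def internalPos : Blk B → List ℕ
  | .gen _ => []
  | .f1 => [1]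
  | .f2 => [1]
  | .f3 => [1]
  | .f4 => [1, 2]
  | .f5 => [1, 2]
  | .f6 => [1, 2]

def isGen : Blk B → Prop
  | .gen _ => True
  | _ => False

/-- Blocks allowed in type `B`: only the forms (1), (2), (3). -/
def isBForm : Blk B → Prop
  | .gen _ => True
  | .f1 => True
  | .f2 => True
  | .f3 => True
  | _ => False

/-- The element of the Temperley–Lieb algebra associated to a block (Definition 3.2.6). -/
def elt {R : Type*} [Ring R] (b1 b2 : R) (g : B → R) : Blk B → R
  | .gen i => g i
  | .f1 => b1 * b2 - 1
  | .f2 => b1 * b2 * b1 - b1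
  | .f3 => b2 * b1 * b2 - b2
  | .f4 => b1 * b2 * b1 * b2 - 2 * (b1 * b2)
  | .f5 => b2 * b1 * b2 - 2 * b2
  | .f6 => b2 * b1 * b2 * b1 - 2 * (b2 * b1)

end Blk

/-- The word spelled by a list of blocks. -/
def blocksWord (s1 s2 : B) (bl : List (Blk B)) : List B :=
  (bl.map (Blk.word s1 s2)).flatten

/-- `bl` is a decomposition of `w ∈ W_c` as in Lemma 3.2.5: the word spelled by the blocks
is a reduced expression for `w` (right justified when `rj = true`), all blocks satisfy `ok`,
the form blocks are maximal (no two adjacent), the occurrences in generator blocks are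
neither internal nor lateral, and within the form blocks the internal occurrences are
exactly the designated ones and all others are lateral. -/
def IsDecomp {W : Type*} [Group W] {M : CoxeterMatrix B} (cs : CoxeterSystem M W)
    (s1 s2 : B) (rj : Bool) (ok : Blk B → Prop) (w : W) (bl : List (Blk B)) : Prop :=
  cs.IsReduced (blocksWord s1 s2 bl) ∧ cs.wordProd (blocksWord s1 s2 bl) = w ∧
  (rj = true → RightJustified M (blocksWord s1 s2 bl)) ∧
  (∀ b ∈ bl, ok b) ∧
  (∀ (j : ℕ) (b b' : Blk B), bl[j]? = some b → bl[j+1]? = some b' → b.isGen ∨ b'.isGen) ∧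
  (∀ (j : ℕ) (b : Blk B) (t : ℕ), bl[j]? = some b → t < (Blk.word s1 s2 b).length →
    (Internal M (blocksWord s1 s2 bl) ((blocksWord s1 s2 (bl.take j)).length + t)
        ↔ t ∈ b.internalPos) ∧
    (Lateral M (blocksWord s1 s2 bl) ((blocksWord s1 s2 (bl.take j)).length + t)
        ↔ (¬ b.isGen ∧ t ∉ b.internalPos)))

/-! ### The generalized Temperley–Lieb algebras -/

/-- The ground ring `A = ℤ[v,v⁻¹]`. -/
abbrev LA : Type := LaurentPolynomial ℤ

/-- `v`. -/
def vv : LA := T 1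

/-- `v⁻¹`. -/
def vinv : LA := T (-1)

/-- `δ = v + v⁻¹`. -/
def δδ : LA := vv + vinv

/-- A Laurent polynomial lies in `ℕ[v, v⁻¹]`, i.e. has non-negative coefficients. -/
def IsNonnegLP (p : LA) : Prop := ∀ z : ℤ, 0 ≤ p.coeff z

/-- Defining relations for the generalized Temperley–Lieb algebra; `c = 5` gives type `H`
and `c = 4` gives type `B`.  Generator index `i` corresponds to `b_{i+1}`. -/
inductive TLrel (c k : ℕ) : FreeAlgebra LA (Fin k) → FreeAlgebra LA (Fin k) → Prop
  | sq (i : Fin k) : TLrel c k (.ι LA i * .ι LA i) (δδ • .ι LA i)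
  | comm (i j : Fin k) (h : (i:ℕ) + 1 < j ∨ (j:ℕ) + 1 < i) :
      TLrel c k (.ι LA i * .ι LA j) (.ι LA j * .ι LA i)
  | braid (i j : Fin k) (h : (i:ℕ) + 1 = j ∨ (j:ℕ) + 1 = i) (hi : 1 ≤ (i:ℕ)) (hj : 1 ≤ (j:ℕ)) :
      TLrel c k (.ι LA i * .ι LA j * .ι LA i) (.ι LA i)
  | hrel (i j : Fin k) (h : ((i:ℕ) = 0 ∧ (j:ℕ) = 1) ∨ ((i:ℕ) = 1 ∧ (j:ℕ) = 0)) (hc : c = 5) :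
      TLrel c k (.ι LA i * .ι LA j * .ι LA i * .ι LA j * .ι LA i)
        ((3 : LA) • (.ι LA i * .ι LA j * .ι LA i) - .ι LA i)
  | brel (i j : Fin k) (h : ((i:ℕ) = 0 ∧ (j:ℕ) = 1) ∨ ((i:ℕ) = 1 ∧ (j:ℕ) = 0)) (hc : c = 4) :
      TLrel c k (.ι LA i * .ι LA j * .ι LA i * .ι LA j) ((2 : LA) • (.ι LA i * .ι LA j))

/-- The generalized Temperley–Lieb algebra (type `H` for `c = 5`, type `B` for `c = 4`). -/
abbrev TL (c k : ℕ) : Type := RingQuot (TLrel c k)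

/-- The generator `b_{i+1}` of `TL c k`. -/
def bgen (c k : ℕ) (i : Fin k) : TL c k := RingQuot.mkAlgHom LA _ (FreeAlgebra.ι LA i)

/-- The monomial `b_{i_1} ⋯ b_{i_l}` attached to a word. -/
def bword (c k : ℕ) (ω : List (Fin k)) : TL c k := (ω.map (bgen c k)).prod

/-- The element `t̃ONE = (b_{i_1} - v⁻¹) ⋯ (b_{i_l} - v⁻¹)` attached to a word. -/
def tword (c k : ℕ) (ω : List (Fin k)) : TL c k :=
  (ω.map (fun i => bgen c k i - algebraMap LA (TL c k) vinv)).prod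

/-- The product of the Temperley–Lieb elements of a list of blocks (giving `f_w` when the
blocks form a decomposition of `w` as in Lemma 3.2.5). -/
def blocksElt (c k : ℕ) (bl : List (Blk (Fin k))) (h1 h2 : Fin k) : TL c k :=
  (bl.map (Blk.elt (bgen c k h1) (bgen c k h2) (bgen c k))).prod

/-- `r` assigns to every element satisfying `P` (e.g. every fully commutative element)
a reduced expression. -/
def IsRedChoice {W : Type*} [Group W] {M : CoxeterMatrix B} (cs : CoxeterSystem M W)
    (P : W → Prop) (r : W → List B) : Prop :=
  ∀ w : W, P w → cs.IsReduced (r w) ∧ cs.wordProd (r w) = w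

/-- The `ℤ[v⁻¹]`-lattice spanned by the elements `gen (r w)`, for `w` satisfying `P`;
realized as the `ℤ`-span of all the `v⁻ʲ`-multiples of these elements. -/
def Latt {W : Type*} (c k : ℕ) (P : W → Prop) (r : W → List (Fin k))
    (gen : List (Fin k) → TL c k) : Submodule ℤ (TL c k) :=
  Submodule.span ℤ {x : TL c k | ∃ (j : ℕ) (w : W), P w ∧ x = (T (-(j:ℤ)) : LA) • gen (r w)}

/-- `bar` is a bar involution: a ring homomorphism fixing each generator `b_i` and acting
on scalars by `v ↦ v⁻¹`. -/
def IsBar (c k : ℕ) (bar : TL c k →+* TL c k) : Prop :=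
  (∀ i : Fin k, bar (bgen c k i) = bgen c k i) ∧
  (∀ m : ℤ, bar (algebraMap LA (TL c k) (T m)) = algebraMap LA (TL c k) (T (-m)))
/-!
A lateral occurrence of `a` next to an internal occurrence of `q` yields, after commutations,
a factor `a q a`; in a reduced expression of a fully commutative element this forces
`m(a, q) ≥ 4`, which in type `H` means `{a, q} = {s₁, s₂}`. So if `a = s₂`, both internal
occurrences are occurrences of `s₁`. Non-commuting letters keep their relative order under
commutations, hence the two occurrences of `s₁` cannot lie on the same side of `a` (the nearer
one would separate `a` from the farther one). If they lie on opposite sides, every letter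
between `a` and the right-hand `s₁` commutes with `s₁`, because every neighbour of `s₁` is a
neighbour of `s₂`; moving that `s₁` next to `a` makes `a` internal, a contradiction.
-/

section Commutations

variable {M : CoxeterMatrix B}

theorem swapAt_involutive (k : ℕ) : Function.Involutive (swapAt k) := by
  intro x; unfold _root_.swapAt; split_ifs <;> omega

theorem swapAt_lt_swapAt_iff {k x y : ℕ} (hx : ¬(x = k ∧ y = k + 1))
    (hy : ¬(x = k + 1 ∧ y = k)) : swapAt k x < swapAt k y ↔ x < y := by
  unfold _root_.swapAt; split_ifs <;> omega

theorem CoxeterSystem.simple_mul_simple_comm {W : Type*} [Group W] (cs : CoxeterSystem M W)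
    {a b : B} (h : M a b = 2) : cs.simple a * cs.simple b = cs.simple b * cs.simple a := by
  have h1 := cs.simple_mul_simple_pow a b
  rw [h, sq] at h1
  calc cs.simple a * cs.simple b = (cs.simple a * cs.simple b)⁻¹ :=
        (inv_eq_of_mul_eq_one_right h1).symm
    _ = cs.simple b * cs.simple a := by rw [mul_inv_rev, cs.inv_simple, cs.inv_simple]

namespace SwapStep

variable {ω ω' : List B} {k : ℕ}

theorem getElem?_swapAt (h : SwapStep M ω ω' k) (x : ℕ) : ω'[swapAt k x]? = ω[x]? := by
  obtain ⟨a, b, ha, hb, -, rfl⟩ := h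
  have hk : k < ω.length := (List.getElem?_eq_some_iff.mp ha).1
  unfold _root_.swapAt
  split_ifs with h1 h2
  · subst h1
    rw [List.getElem?_set_self (by simpa using (List.getElem?_eq_some_iff.mp hb).1), ha]
  · subst h2
    rw [List.getElem?_set_ne (by omega), List.getElem?_set_self hk, hb]
  · rw [List.getElem?_set_ne (by omega), List.getElem?_set_ne (by omega)]

theorem wordProd_eq {W : Type*} [Group W] (cs : CoxeterSystem M W)
    (h : SwapStep M ω ω' k) : cs.wordProd ω' = cs.wordProd ω := by
  obtain ⟨a, b, ha, hb, hab, rfl⟩ := h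
  induction ω generalizing k with
  | nil => simp at ha
  | cons x t ih =>
    cases k with
    | zero =>
      cases t with
      | nil => simp at hb
      | cons y t =>
        obtain ⟨rfl, rfl⟩ : x = a ∧ y = b := by simp_all
        simp only [List.set_cons_zero, List.set_cons_succ, cs.wordProd_cons, ← mul_assoc,
          cs.simple_mul_simple_comm hab]
    | succ k =>
      simp only [List.set_cons_succ, cs.wordProd_cons]
      rw [ih (by simpa using ha) (by simpa using hb)]

end SwapStep

namespace CommPath

variable {ω ω' ω'' : List B} {f g : ℕ → ℕ}

theorem getElem?_apply (h : CommPath M ω ω' f) (x : ℕ) : ω'[f x]? = ω[x]? := by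
  induction h with
  | refl => rfl
  | step _ hs ih => rw [Function.comp_apply, hs.getElem?_swapAt, ih]

theorem bijective (h : CommPath M ω ω' f) : Function.Bijective f := by
  induction h with
  | refl => exact Function.bijective_id
  | @step _ _ _ k _ _ ih => exact (swapAt_involutive k).bijective.comp ih

theorem trans (h : CommPath M ω ω' f) (h' : CommPath M ω' ω'' g) :
    CommPath M ω ω'' (g ∘ f) := by
  induction h' with
  | refl => exact h
  | step _ hs ih => exact ih.step hs

theorem wordProd_eq {W : Type*} [Group W] (cs : CoxeterSystem M W) (h : CommPath M ω ω' f) :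
    cs.wordProd ω' = cs.wordProd ω := by
  induction h with
  | refl => rfl
  | step _ hs ih => rw [hs.wordProd_eq cs, ih]

theorem isReduced {W : Type*} [Group W] {cs : CoxeterSystem M W} (h : CommPath M ω ω' f)
    (hred : cs.IsReduced ω) : cs.IsReduced ω' := by
  have hlen : ω'.length = ω.length := by
    induction h with
    | refl => rfl
    | step _ hs ih => obtain ⟨_, _, _, _, _, rfl⟩ := hs; simpa using ih
  unfold CoxeterSystem.IsReduced at *
  rw [h.wordProd_eq cs, hlen, hred]

theorem lt_iff_lt (h : CommPath M ω ω' f) {u v : ℕ} {a b : B} (hu : ω[u]? = some a)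
    (hv : ω[v]? = some b) (hab : M a b ≠ 2) : f u < f v ↔ u < v := by
  induction h with
  | refl => rfl
  | @step ω₁ _ f₁ k hpath hs ih =>
    obtain ⟨c, d, hc, hd, hcd, -⟩ := hs
    have hu₁ := (hpath.getElem?_apply u).trans hu
    have hv₁ := (hpath.getElem?_apply v).trans hv
    rw [Function.comp_apply, Function.comp_apply, ← ih]
    apply swapAt_lt_swapAt_iff
    · rintro ⟨h₁, h₂⟩
      rw [h₁, hc] at hu₁
      rw [h₂, hd] at hv₁
      exact hab (by rwa [← Option.some.inj hu₁, ← Option.some.inj hv₁])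
    · rintro ⟨h₁, h₂⟩
      rw [h₁, hd] at hu₁
      rw [h₂, hc] at hv₁
      exact hab (by rwa [← Option.some.inj hu₁, ← Option.some.inj hv₁, M.symmetric])

theorem not_lt_lt_of_adjacent (h : CommPath M ω ω' f) {u v z : ℕ} {a b c : B}
    (hu : ω[u]? = some a) (hv : ω[v]? = some b) (hz : ω[z]? = some c) (hac : M a c ≠ 2)
    (hcb : M c b ≠ 2) (hadj : f u + 1 = f v) : ¬(u < z ∧ z < v) := by
  rintro ⟨huz, hzv⟩
  have := (h.lt_iff_lt hu hz hac).2 huz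
  have := (h.lt_iff_lt hz hv hcb).2 hzv
  omega

end CommPath

theorem exists_commPath_move_left {ω : List B} {c : B} {i j : ℕ} (hc : ω[j]? = some c)
    (hij : i < j) (hcomm : ∀ k x, i < k → k < j → ω[k]? = some x → M x c = 2) :
    ∃ (ω' : List B) (g : ℕ → ℕ), CommPath M ω ω' g ∧ g j = i + 1 ∧ ∀ x ≤ i, g x = x := by
  obtain ⟨d, rfl⟩ : ∃ d, j = i + 1 + d := ⟨j - (i + 1), by omega⟩
  induction d generalizing i with
  | zero => exact ⟨ω, id, .refl ω, rfl, fun _ _ => rfl⟩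
  | succ d ih =>
    obtain ⟨ω', g, path, hg, hfix⟩ :=
      ih (i := i + 1) (by rwa [show i + 1 + 1 + d = i + 1 + (d + 1) by omega]) (by omega)
        (fun k x hk₁ hk₂ => hcomm k x (by omega) (by omega))
    have hlen : i + 1 < ω.length := by
      have := (List.getElem?_eq_some_iff.mp hc).1; omega
    obtain ⟨x, hx⟩ : ∃ x, ω[i + 1]? = some x := ⟨_, List.getElem?_eq_getElem hlen⟩
    have hx' : ω'[i + 1]? = some x := by rw [← hfix _ le_rfl, path.getElem?_apply, hx]
    have hc' : ω'[i + 1 + 1]? = some c := by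
      rw [← hg, path.getElem?_apply, show i + 1 + 1 + d = i + 1 + (d + 1) by omega, hc]
    refine ⟨_, swapAt (i + 1) ∘ g,
      path.step ⟨x, c, hx', hc', hcomm _ x (by omega) (by omega) hx, rfl⟩, ?_, fun y hy => ?_⟩
    · rw [Function.comp_apply, show i + 1 + (d + 1) = i + 1 + 1 + d by omega, hg]
      unfold _root_.swapAt; simp
    · rw [Function.comp_apply, hfix y (by omega)]
      unfold _root_.swapAt; split_ifs <;> omega

end Commutations

section Lateral

variable {M : CoxeterMatrix B} {ω ω₁ ω₂ : List B} {f₁ f₂ : ℕ → ℕ} {p r₁ r₂ : ℕ} {a q : B}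

theorem eq_of_adjacent_before (path₁ : CommPath M ω ω₁ f₁) (path₂ : CommPath M ω ω₂ f₂)
    (hp : ω[p]? = some a) (hr₁ : ω[r₁]? = some q) (hr₂ : ω[r₂]? = some q) (haq : M a q ≠ 2)
    (h₁ : f₁ p + 1 = f₁ r₁) (h₂ : f₂ p + 1 = f₂ r₂) : r₁ = r₂ := by
  have hqq : M q q ≠ 2 := by rw [M.diagonal]; omega
  have hpr₁ : p < r₁ := (path₁.lt_iff_lt hp hr₁ haq).1 (by omega)
  have hpr₂ : p < r₂ := (path₂.lt_iff_lt hp hr₂ haq).1 (by omega)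
  rcases lt_trichotomy r₁ r₂ with h | h | h
  · exact absurd ⟨hpr₁, h⟩ (path₂.not_lt_lt_of_adjacent hp hr₂ hr₁ haq hqq h₂)
  · exact h
  · exact absurd ⟨hpr₂, h⟩ (path₁.not_lt_lt_of_adjacent hp hr₁ hr₂ haq hqq h₁)

theorem eq_of_adjacent_after (path₁ : CommPath M ω ω₁ f₁) (path₂ : CommPath M ω ω₂ f₂)
    (hp : ω[p]? = some a) (hr₁ : ω[r₁]? = some q) (hr₂ : ω[r₂]? = some q) (haq : M a q ≠ 2)
    (h₁ : f₁ p = f₁ r₁ + 1) (h₂ : f₂ p = f₂ r₂ + 1) : r₁ = r₂ := by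
  have hqq : M q q ≠ 2 := by rw [M.diagonal]; omega
  have hqa : M q a ≠ 2 := by rwa [M.symmetric]
  have hr₁p : r₁ < p := (path₁.lt_iff_lt hr₁ hp hqa).1 (by omega)
  have hr₂p : r₂ < p := (path₂.lt_iff_lt hr₂ hp hqa).1 (by omega)
  rcases lt_trichotomy r₁ r₂ with h | h | h
  · exact absurd ⟨h, hr₂p⟩ (path₁.not_lt_lt_of_adjacent hr₁ hp hr₂ hqq hqa h₁.symm)
  · exact h
  · exact absurd ⟨h, hr₁p⟩ (path₂.not_lt_lt_of_adjacent hr₂ hp hr₁ hqq hqa h₂.symm)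

theorem internal_of_adjacent_after_before (path₁ : CommPath M ω ω₁ f₁)
    (path₂ : CommPath M ω ω₂ f₂) (hp : ω[p]? = some a) (hr₁ : ω[r₁]? = some q)
    (hr₂ : ω[r₂]? = some q) (haq : 3 ≤ M a q) (hnbr : ∀ x, M x q ≠ 2 → M a x ≠ 2)
    (h₁ : f₁ p = f₁ r₁ + 1) (h₂ : f₂ p + 1 = f₂ r₂) : Internal M ω p := by
  have haq₂ : M a q ≠ 2 := by omega
  have hpr₂ : f₁ p < f₁ r₂ :=
    (path₁.lt_iff_lt hp hr₂ haq₂).2 ((path₂.lt_iff_lt hp hr₂ haq₂).1 (by omega))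
  -- a letter between the two that does not commute with `q` would separate them in `ω₂` too
  have hcomm : ∀ k x, f₁ p < k → k < f₁ r₂ → ω₁[k]? = some x → M x q = 2 := by
    intro k x hk₁ hk₂ hx
    by_contra hxq
    obtain ⟨z, rfl⟩ := path₁.bijective.2 k
    rw [path₁.getElem?_apply] at hx
    exact path₂.not_lt_lt_of_adjacent hp hr₂ hx (hnbr x hxq) hxq h₂
      ⟨(path₁.lt_iff_lt hp hx (hnbr x hxq)).1 hk₁, (path₁.lt_iff_lt hx hr₂ hxq).1 hk₂⟩
  obtain ⟨ω', g, path, hg, hfix⟩ :=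
    exists_commPath_move_left (by rwa [path₁.getElem?_apply]) hpr₂ hcomm
  have hgp : g (f₁ p) = f₁ p := hfix _ le_rfl
  refine ⟨ω', g ∘ f₁, a, q, path₁.trans path, ?_, ?_, ?_, ?_, haq⟩ <;>
    simp only [Function.comp_apply, hgp]
  · omega
  · rw [← hgp, path.getElem?_apply, path₁.getElem?_apply, hp]
  · rw [h₁, Nat.add_sub_cancel, ← hfix (f₁ r₁) (by omega), path.getElem?_apply,
      path₁.getElem?_apply, hr₁]
  · rw [← hg, path.getElem?_apply, path₁.getElem?_apply, hr₂]

theorem LateralWrt.eq_of_lateralWrt (hp : ω[p]? = some a) (hr₁ : ω[r₁]? = some q)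
    (hr₂ : ω[r₂]? = some q) (hnbr : ∀ x, M x q ≠ 2 → M a x ≠ 2)
    (h₁ : LateralWrt M ω p r₁) (h₂ : LateralWrt M ω p r₂) : r₁ = r₂ := by
  obtain ⟨hext, -, ω₁, f₁, a', q', path₁, side₁, -, hq', -, -, hp', haq⟩ := h₁
  obtain ⟨-, -, ω₂, f₂, -, -, path₂, side₂, -⟩ := h₂
  rw [path₁.getElem?_apply] at hp' hq'
  obtain rfl : a' = a := Option.some.inj (hp'.symm.trans hp)
  obtain rfl : q' = q := Option.some.inj (hq'.symm.trans hr₁)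
  have haq₂ : M a' q' ≠ 2 := by omega
  rcases side₁ with s₁ | s₁ <;> rcases side₂ with s₂ | s₂
  · exact eq_of_adjacent_before path₁ path₂ hp hr₁ hr₂ haq₂ s₁ s₂
  · exact absurd (internal_of_adjacent_after_before path₂ path₁ hp hr₂ hr₁ haq hnbr s₂ s₁) hext
  · exact absurd (internal_of_adjacent_after_before path₁ path₂ hp hr₁ hr₂ haq hnbr s₁ s₂) hext
  · exact eq_of_adjacent_after path₁ path₂ hp hr₁ hr₂ haq₂ s₁ s₂

theorem FC.not_alternatingWord_infix {W : Type*} [Group W] {cs : CoxeterSystem M W} {w : W}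
    (hw : FC cs w) (hred : cs.IsReduced ω) (hω : cs.wordProd ω = w) {i j : B}
    (hij : 3 ≤ M i j) : ¬ alternatingWord i j (M i j) <:+: ω := by
  rintro ⟨u, v, rfl⟩
  set x := alternatingWord i j (M i j)
  have hw' : w = cs.wordProd u * cs.wordProd x * cs.wordProd v := by
    rw [← hω, cs.wordProd_append, cs.wordProd_append]
  refine hw ⟨cs.wordProd u, cs.wordProd v, i, j, hij, hw', ?_⟩
  change _ = _ + cs.length (cs.wordProd x) + _
  have hlen : cs.length w = u.length + x.length + v.length := by
    rw [← hω, hred, List.length_append, List.length_append]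
  have h₁ := cs.length_mul_le (cs.wordProd u * cs.wordProd x) (cs.wordProd v)
  have h₂ := cs.length_mul_le (cs.wordProd u) (cs.wordProd x)
  rw [← hw'] at h₁
  have := cs.length_wordProd_le u
  have := cs.length_wordProd_le x
  have := cs.length_wordProd_le v
  omega

theorem LateralWrt.exists_four_le_of_FC {W : Type*} [Group W] {cs : CoxeterSystem M W} {w : W}
    (hw : FC cs w) (hred : cs.IsReduced ω) (hω : cs.wordProd ω = w) (h : LateralWrt M ω p r₁) :
    ∃ a q, ω[p]? = some a ∧ ω[r₁]? = some q ∧ 4 ≤ M a q := by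
  obtain ⟨-, -, ω', f, a, q, path, -, hpos, hq, hl, hr', hp, haq⟩ := h
  refine ⟨a, q, by rwa [← path.getElem?_apply], by rwa [← path.getElem?_apply], ?_⟩
  by_contra! h3
  have hqa : M q a = 3 := by rw [M.symmetric]; omega
  refine hw.not_alternatingWord_infix (path.isReduced hred) ((path.wordProd_eq cs).trans hω)
    (i := q) (j := a) hqa.ge ?_
  rw [hqa]
  refine List.infix_iff_getElem?.mpr ⟨f r₁ - 1, ?_, fun k hk => ?_⟩
  · have := (List.getElem?_eq_some_iff.mp hr').1
    simp [alternatingWord]; omega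
  · simp only [alternatingWord, List.length_concat, List.length_nil] at hk
    interval_cases k
    · simpa [alternatingWord] using hl
    · simpa [alternatingWord, show 1 + (f r₁ - 1) = f r₁ by omega] using hq
    · simpa [alternatingWord, show 2 + (f r₁ - 1) = f r₁ + 1 by omega] using hr'

end Lateral

theorem Hmat_apply (k : ℕ) (i j : Fin k) : Hmat k i j = genM 5 i j := rfl

theorem eq_or_of_four_le_genM_five {x y : ℕ} (h : 4 ≤ genM 5 x y) :
    x = 0 ∧ y = 1 ∨ x = 1 ∧ y = 0 := by
  unfold genM at h; split_ifs at h <;> omega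

theorem genM_one_ne_two_of_ne_two {c x : ℕ} (hc : 3 ≤ c) (h : genM c x 0 ≠ 2) :
    genM c 1 x ≠ 2 := by
  unfold genM at h ⊢; split_ifs at h ⊢ <;> simp_all <;> omega

/-- Lemma 3.2.1: in a reduced expression for a fully commutative element of
the Coxeter group of type `H_{n-1}`, every bilateral occurrence of a letter is an occurrence
of the generator `s₁`. -/
theorem stmt_0 (n : ℕ) (hn : 3 ≤ n) (W : Type) [Group W]
    (cs : CoxeterSystem (Hmat (n-1)) W) (w : W) (hw : FC cs w)
    (ω : List (Fin (n-1))) (hred : cs.IsReduced ω) (hprod : cs.wordProd ω = w)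
    (p : ℕ) (hp : Bilateral (Hmat (n-1)) ω p) :
    ω[p]? = some (⟨0, by omega⟩ : Fin (n-1)) := by
  obtain ⟨r₁, r₂, hne, h₁, h₂⟩ := hp
  obtain ⟨a, q₁, hpa, hq₁, hM₁⟩ := h₁.exists_four_le_of_FC hw hred hprod
  obtain ⟨a', q₂, hpa', hq₂, hM₂⟩ := h₂.exists_four_le_of_FC hw hred hprod
  obtain rfl : a' = a := Option.some.inj (hpa'.symm.trans hpa)
  rw [Hmat_apply] at hM₁ hM₂
  rcases eq_or_of_four_le_genM_five hM₁ with ⟨ha, -⟩ | ⟨ha, hq⟩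
  · rw [hpa]; exact congrArg some (Fin.ext ha)
  · obtain ⟨-, hq'⟩ := (eq_or_of_four_le_genM_five hM₂).resolve_left (by omega)
    obtain rfl : q₂ = q₁ := Fin.ext (by omega)
    refine absurd (h₁.eq_of_lateralWrt hpa hq₁ hq₂ (fun x hx => ?_) h₂) hne
    rw [Hmat_apply, hq] at hx
    rw [Hmat_apply, ha]
    exact genM_one_ne_two_of_ne_two (by norm_num) hx

end
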